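/- arXiv:2604.04907 — 3 statements merged into one kernel-verified Lean document; each statement's English description precedes it below -/
import Mathlib

section
/- Let k, t ≥ 2 be integers and let G_{k,t} be the sequential join of t copies of the discrete (edgeless) graph D_k on k vertices. Then gpn(G_{k,t}) = (1/(k−1))·( (k^{t+2} − k^3)/(k−1) + k^3(k−2)(t−1) ) + kt. -/
open SimpleGraph

/-- The number of geodesics (shortest paths) in `G` between `u` and `v`. -/
noncomputable def numGeodesics {V : Type*} (G : SimpleGraph V) (u v : V) : ℕ :=
  {p : G.Walk u v | p.IsPath ∧ p.length = G.dist u v}.ncard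

lemma numGeodesics_comm {V : Type*} (G : SimpleGraph V) (u v : V) :
    numGeodesics G u v = numGeodesics G v u := by
  have himg : {p : G.Walk v u | p.IsPath ∧ p.length = G.dist v u} =
      (fun p : G.Walk u v => p.reverse) '' {p : G.Walk u v | p.IsPath ∧ p.length = G.dist u v} := by
    ext p
    constructor
    · rintro ⟨hp, hl⟩
      exact ⟨p.reverse, ⟨hp.reverse, by
        rw [SimpleGraph.Walk.length_reverse, hl, SimpleGraph.dist_comm]⟩, p.reverse_reverse⟩
    · rintro ⟨q, ⟨hq, hl⟩, rfl⟩
      exact ⟨hq.reverse, by rw [SimpleGraph.Walk.length_reverse, hl, SimpleGraph.dist_comm]⟩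
  have hinj : Function.Injective (fun p : G.Walk u v => p.reverse) := by
    intro p q h
    simpa using congrArg SimpleGraph.Walk.reverse h
  unfold numGeodesics
  rw [himg, Set.ncard_image_of_injective _ hinj]

/-- The geodesic subpath number of a finite graph: the sum, over unordered pairs of
distinct vertices, of the number of geodesics between them, plus `n` for the `n`
geodesics of length zero. -/
noncomputable def gpn {V : Type*} [Fintype V] [DecidableEq V] (G : SimpleGraph V) : ℕ :=
  (∑ e ∈ Finset.univ.filter (fun e : Sym2 V => ¬ e.IsDiag),
      Sym2.lift ⟨fun u v => numGeodesics G u v, fun u v => numGeodesics_comm G u v⟩ e)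
    + Fintype.card V

/-- The sequential join of `t` copies of the discrete graph `D_k` on `k` vertices:
vertex `(i, a)` lies in the `i`-th copy, and two vertices are adjacent iff they lie
in consecutive copies. -/
def seqJoin (k t : ℕ) : SimpleGraph (Fin t × Fin k) where
  Adj a b := ((a.1 : ℕ) + 1 = (b.1 : ℕ)) ∨ ((b.1 : ℕ) + 1 = (a.1 : ℕ))
  symm := ⟨by intro a b h; exact h.symm⟩
  loopless := ⟨by intro a h; rcases h with h | h <;> omega⟩

/-!
Vertices in layers `i < j` are at distance `j - i`: a geodesic between them climbs one layer
per step and may pass through any of the `k` vertices of each of the `j - i - 1` intermediate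
layers, so there are `k ^ (j - i - 1)` of them. Two distinct vertices of one layer are at
distance `2` and have the vertices of the adjacent layers as common neighbours, one geodesic
through each. Summing over ordered pairs of vertices, `2 * gpn` becomes a double sum over pairs
of layers of a function of `|i - j|`, which is evaluated by induction on `t`.
-/

open Finset

theorem Finset.sum_offDiag_sym2_mk {α M : Type*} [DecidableEq α] [AddCommMonoid M]
    (s : Finset α) (f : Sym2 α → M) :
    ∑ p ∈ s.offDiag, f s(p.1, p.2) = 2 • ∑ e ∈ s.offDiag.image Sym2.mk.uncurry, f e := by
  rw [sum_comp, smul_sum]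
  refine sum_congr rfl fun e he => ?_
  obtain ⟨⟨a, b⟩, hab, rfl⟩ := mem_image.mp he
  have hne : a ≠ b := (mem_offDiag.mp hab).2.2
  have hfiber : {p ∈ s.offDiag | s(p.1, p.2) = Sym2.mk.uncurry (a, b)} = {(a, b), (b, a)} := by
    ext ⟨x, y⟩
    simp only [mem_filter, Finset.mem_insert, Finset.mem_singleton, Prod.mk.injEq, Sym2.eq_iff,
      Function.uncurry_apply_pair]
    grind
  rw [hfiber, card_pair (by simp [hne])]

theorem Fin.sum_univ_sum_univ_eq_sum_range_sum_range {M : Type*} [AddCommMonoid M]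
    (f : ℕ → ℕ → M) (n : ℕ) :
    ∑ i : Fin n, ∑ j : Fin n, f i j = ∑ i ∈ range n, ∑ j ∈ range n, f i j := by
  rw [Fin.sum_univ_eq_sum_range (fun i => ∑ j : Fin n, f i j)]
  simp only [Fin.sum_univ_eq_sum_range (f _)]

theorem Finset.sum_range_sum_range_dist_succ {M : Type*} [AddCommMonoid M] (f : ℕ → M)
    (n : ℕ) :
    ∑ i ∈ range (n + 1), ∑ j ∈ range (n + 1), f (Nat.dist i j)
      = ∑ i ∈ range n, ∑ j ∈ range n, f (Nat.dist i j) + f 0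
        + 2 • ∑ d ∈ range n, f (d + 1) := by
  have hrow : ∑ j ∈ range n, f (Nat.dist n j) = ∑ d ∈ range n, f (d + 1) := by
    rw [← sum_range_reflect]
    refine sum_congr rfl fun j hj => ?_
    have := mem_range.mp hj
    rw [Nat.dist_eq_sub_of_le_right (by omega)]
    congr 1
    omega
  have hcol : ∑ i ∈ range n, f (Nat.dist i n) = ∑ d ∈ range n, f (d + 1) := by
    simp_rw [Nat.dist_comm _ n]
    exact hrow
  simp only [sum_range_succ, sum_add_distrib, hrow, hcol, Nat.dist_self]
  abel

theorem Finset.sum_range_sum_range_ite_dist_eq_one (n : ℕ) :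
    ∑ i ∈ range n, ∑ j ∈ range n, (if Nat.dist i j = 1 then 1 else 0) = 2 * (n - 1) := by
  induction n with
  | zero => simp
  | succ n ih =>
    rw [sum_range_sum_range_dist_succ (fun d => if d = 1 then 1 else 0), ih]
    simp only [zero_ne_one, if_false, add_zero, Nat.add_eq_right, sum_ite_eq', mem_range,
      smul_eq_mul, mul_ite, mul_one, mul_zero, add_tsub_cancel_right]
    split_ifs <;> omega

theorem Finset.sum_range_sum_range_pow_dist_mul {R : Type*} [CommRing R] (x : R) (n : ℕ) :
    (∑ i ∈ range n, ∑ j ∈ range n, if Nat.dist i j = 0 then 0 else x ^ (Nat.dist i j - 1))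
        * (x - 1) ^ 2 = 2 * (x ^ n - 1 - n * (x - 1)) := by
  induction n with
  | zero => simp
  | succ n ih =>
    rw [sum_range_sum_range_dist_succ (fun d => if d = 0 then 0 else x ^ (d - 1))]
    simp only [if_pos, Nat.add_one_ne_zero, if_false, Nat.add_sub_cancel, nsmul_eq_mul]
    have hgeom := geom_sum_mul x n
    push_cast
    linear_combination ih + 2 * (x - 1) * hgeom

namespace SimpleGraph

variable {V : Type*} (G : SimpleGraph V)

theorem natCard_walk_length_zero [DecidableEq V] (u v : V) :
    Nat.card {p : G.Walk u v // p.length = 0} = if u = v then 1 else 0 := by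
  split_ifs with h
  · subst h
    exact Nat.card_eq_one_iff_exists.mpr
      ⟨⟨.nil, rfl⟩, fun p => Subtype.ext (Walk.length_eq_zero_iff.mp p.2).eq_nil⟩
  · have : IsEmpty {p : G.Walk u v // p.length = 0} :=
      ⟨fun p => h (Walk.eq_of_length_eq_zero p.2)⟩
    exact Nat.card_of_isEmpty

theorem natCard_walk_length_succ [Fintype V] [DecidableEq V] [DecidableRel G.Adj]
    (n : ℕ) (u v : V) :
    Nat.card {p : G.Walk u v // p.length = n + 1}
      = ∑ w ∈ G.neighborFinset u, Nat.card {p : G.Walk w v // p.length = n} := by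
  have h := G.adjMatrix_pow_apply_eq_card_walk (α := ℕ) (n + 1) u v
  rw [pow_succ', adjMatrix_mul_apply] at h
  simp only [adjMatrix_pow_apply_eq_card_walk, Nat.cast_id] at h
  simp only [Nat.card_eq_fintype_card]
  exact h.symm

theorem dist_eq_two {u v w : V} (hne : u ≠ v) (hnadj : ¬ G.Adj u v) (huw : G.Adj u w)
    (hwv : G.Adj w v) : G.dist u v = 2 := by
  let p : G.Walk u v := .cons huw (.cons hwv .nil)
  exact le_antisymm (G.dist_le p) (Reachable.one_lt_dist_of_ne_of_not_adj ⟨p⟩ hne hnadj)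

theorem numGeodesics_eq_natCard_walk (u v : V) :
    numGeodesics G u v = Nat.card {p : G.Walk u v // p.length = G.dist u v} := by
  rw [numGeodesics, ← Nat.card_coe_set_eq]
  congr! 3 with p
  exact and_iff_right_of_imp p.isPath_of_length_eq_dist

theorem numGeodesics_self (u : V) : numGeodesics G u u = 1 := by
  classical
  rw [numGeodesics_eq_natCard_walk, dist_self, natCard_walk_length_zero, if_pos rfl]

theorem numGeodesics_of_dist_eq_two {u v : V} (h : G.dist u v = 2) :
    numGeodesics G u v = Nat.card (G.commonNeighbors u v) := by
  rw [numGeodesics_eq_natCard_walk, h, Nat.card_congr (G.walkLengthTwoEquivCommonNeighbors u v)]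

theorem two_mul_gpn [Fintype V] [DecidableEq V] :
    2 * gpn G = ∑ u, ∑ v, numGeodesics G u v + Fintype.card V := by
  have hdiag : ∑ u, ∑ v, numGeodesics G u v
      = ∑ p ∈ (univ : Finset V).offDiag, numGeodesics G p.1 p.2 + Fintype.card V := by
    rw [← sum_product', ← diag_union_offDiag, sum_union (disjoint_diag_offDiag _), add_comm]
    simp [numGeodesics_self]
  have hsym2 : univ.filter (fun e : Sym2 V => ¬ e.IsDiag)
      = (univ : Finset V).offDiag.image Sym2.mk.uncurry := by
    rw [← Sym2.filter_image_mk_not_isDiag, univ_product_univ, image_univ_of_surjective]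
    exact fun e => e.ind fun a b => ⟨(a, b), rfl⟩
  have hoff := sum_offDiag_sym2_mk (univ : Finset V)
    (Sym2.lift ⟨fun u v => numGeodesics G u v, fun u v => numGeodesics_comm G u v⟩)
  simp only [Sym2.lift_mk, smul_eq_mul] at hoff
  rw [gpn, hdiag, hoff, hsym2]
  ring

end SimpleGraph

namespace seqJoin

variable {k t : ℕ}

instance : DecidableRel (seqJoin k t).Adj := fun _ _ =>
  inferInstanceAs (Decidable (_ ∨ _))

theorem fst_le_fst_add_length {u v : Fin t × Fin k} (p : (seqJoin k t).Walk u v) :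
    (v.1 : ℕ) ≤ u.1 + p.length := by
  induction p with
  | nil => simp
  | cons h q ih => simp only [Walk.length_cons]; rcases h with h | h <;> omega

theorem natCard_walk_length_succ_up {i j : Fin t} {n : ℕ} (hij : (j : ℕ) = i + (n + 1))
    (a b : Fin k) :
    Nat.card {p : (seqJoin k t).Walk (i, a) (j, b) // p.length = n + 1}
      = ∑ c : Fin k, Nat.card {p : (seqJoin k t).Walk (⟨i + 1, by omega⟩, c) (j, b) //
          p.length = n} := by
  set i' : Fin t := ⟨i + 1, by omega⟩
  have hup : univ.image (fun c : Fin k => (i', c)) ⊆ (seqJoin k t).neighborFinset (i, a) := by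
    intro w hw
    obtain ⟨c, -, rfl⟩ := mem_image.mp hw
    exact (mem_neighborFinset _ _ _).mpr (Or.inl rfl)
  rw [natCard_walk_length_succ, ← sum_subset hup,
    sum_image (Prod.mk_right_injective i').injOn]
  -- a neighbour in layer `i - 1` is too far below layer `j` to reach it in `n` steps
  rintro ⟨l, c⟩ hadj hl
  have hdown : (l : ℕ) + 1 = i := by
    rcases (mem_neighborFinset _ _ _).mp hadj with h | h
    · exact (hl (mem_image.mpr ⟨c, mem_univ _, by ext <;> simp [i', h]⟩)).elim
    · exact h
  have : IsEmpty {p : (seqJoin k t).Walk (l, c) (j, b) // p.length = n} :=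
    ⟨fun ⟨p, hp⟩ => by have := fst_le_fst_add_length p; simp only at this; omega⟩
  exact Nat.card_of_isEmpty

theorem natCard_walk_up {i j : Fin t} {n : ℕ} (hij : (j : ℕ) = i + (n + 1)) (a b : Fin k) :
    Nat.card {p : (seqJoin k t).Walk (i, a) (j, b) // p.length = n + 1} = k ^ n := by
  induction n generalizing i a with
  | zero =>
    have hj : (⟨i + 1, by omega⟩ : Fin t) = j := Fin.ext hij.symm
    rw [natCard_walk_length_succ_up hij]
    simp only [SimpleGraph.natCard_walk_length_zero, hj, Prod.mk.injEq, true_and]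
    simp
  | succ n ih =>
    rw [natCard_walk_length_succ_up hij]
    simp only [ih (i := ⟨i + 1, by omega⟩) (by simp only; omega)]
    simp [pow_succ, mul_comm]

theorem dist_of_lt {i j : Fin t} (hij : (i : ℕ) < j) (a b : Fin k) :
    (seqJoin k t).dist (i, a) (j, b) = j - i := by
  obtain ⟨n, hn⟩ : ∃ n, (j : ℕ) = i + (n + 1) := ⟨j - i - 1, by omega⟩
  obtain ⟨⟨p, hp⟩⟩ := (Nat.card_pos_iff.mp (natCard_walk_up hn a b ▸ pow_pos a.pos n)).1
  obtain ⟨q, hq⟩ := Reachable.exists_walk_length_eq_dist ⟨p⟩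
  have hle : (seqJoin k t).dist (i, a) (j, b) ≤ p.length := dist_le p
  have hge : (j : ℕ) ≤ i + q.length := fst_le_fst_add_length q
  omega

theorem numGeodesics_of_lt {i j : Fin t} (hij : (i : ℕ) < j) (a b : Fin k) :
    numGeodesics (seqJoin k t) (i, a) (j, b) = k ^ ((j : ℕ) - i - 1) := by
  obtain ⟨n, hn⟩ : ∃ n, (j : ℕ) = i + (n + 1) := ⟨j - i - 1, by omega⟩
  rw [numGeodesics_eq_natCard_walk, dist_of_lt hij, show (j : ℕ) - i = n + 1 by omega,
    natCard_walk_up hn, Nat.add_sub_cancel]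

theorem commonNeighbors_mk_mk (i : Fin t) (a b : Fin k) :
    (seqJoin k t).commonNeighbors (i, a) (i, b)
      = ↑(({j | Nat.dist i j = 1} : Finset (Fin t)) ×ˢ (univ : Finset (Fin k))) := by
  ext ⟨j, c⟩
  simp only [commonNeighbors, seqJoin, Set.mem_inter_iff, mem_neighborSet, and_self, coe_product,
    coe_filter, mem_univ, true_and, coe_univ, Set.mem_prod, Set.mem_ofPred_eq, Set.mem_univ,
    and_true]
  unfold Nat.dist
  omega

theorem dist_of_ne (ht : 2 ≤ t) (i : Fin t) {a b : Fin k} (hab : a ≠ b) :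
    (seqJoin k t).dist (i, a) (i, b) = 2 := by
  obtain ⟨j, hj⟩ : ∃ j : Fin t, (i : ℕ) + 1 = j ∨ (j : ℕ) + 1 = i := by
    by_cases h : (i : ℕ) + 1 < t
    · exact ⟨⟨i + 1, h⟩, Or.inl rfl⟩
    · exact ⟨⟨i - 1, by omega⟩, Or.inr (by simp only; omega)⟩
  exact dist_eq_two _ (by simpa using hab) (by simp [seqJoin]) (w := (j, a)) hj hj.symm

theorem numGeodesics_of_ne (ht : 2 ≤ t) (i : Fin t) {a b : Fin k} (hab : a ≠ b) :
    numGeodesics (seqJoin k t) (i, a) (i, b) = #{j : Fin t | Nat.dist i j = 1} * k := by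
  rw [numGeodesics_of_dist_eq_two _ (dist_of_ne ht i hab), commonNeighbors_mk_mk,
    Nat.card_coe_set_eq, Set.ncard_coe_finset, card_product, card_univ, Fintype.card_fin]

theorem numGeodesics_eq (ht : 2 ≤ t) (i j : Fin t) (a b : Fin k) :
    numGeodesics (seqJoin k t) (i, a) (j, b) =
      if i = j then (if a = b then 1 else #{l : Fin t | Nat.dist i l = 1} * k)
      else k ^ (Nat.dist i j - 1) := by
  rcases lt_trichotomy (i : ℕ) j with h | h | h
  · rw [if_neg (Fin.ne_of_lt h), numGeodesics_of_lt h, Nat.dist_eq_sub_of_le h.le]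
  · obtain rfl := Fin.ext h
    rw [if_pos rfl]
    split_ifs with hab
    · rw [hab, numGeodesics_self]
    · exact numGeodesics_of_ne ht i hab
  · rw [if_neg (Fin.ne_of_gt h), numGeodesics_comm, numGeodesics_of_lt h,
      Nat.dist_eq_sub_of_le_right h.le]

theorem sum_sum_numGeodesics (ht : 2 ≤ t) (i j : Fin t) :
    ∑ a, ∑ b, numGeodesics (seqJoin k t) (i, a) (j, b) =
      (if i = j then k * (1 + (k - 1) * (#{l : Fin t | Nat.dist i l = 1} * k)) else 0)
        + k * k * (if Nat.dist i j = 0 then 0 else k ^ (Nat.dist i j - 1)) := by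
  have hdist : Nat.dist i j = 0 ↔ i = j := by
    rw [Fin.ext_iff]
    exact ⟨Nat.eq_of_dist_eq_zero, Nat.dist_eq_zero⟩
  simp_rw [numGeodesics_eq ht, hdist]
  split_ifs
  · simp [sum_ite, filter_eq, filter_ne]
  · simp [mul_assoc]

theorem sum_numGeodesics (ht : 2 ≤ t) :
    ∑ u, ∑ v, numGeodesics (seqJoin k t) u v =
      t * k + (k - 1) * k ^ 2 * (2 * (t - 1))
        + k ^ 2 * ∑ i ∈ range t, ∑ j ∈ range t,
            if Nat.dist i j = 0 then 0 else k ^ (Nat.dist i j - 1) := by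
  have hblocks : ∑ u, ∑ v, numGeodesics (seqJoin k t) u v
      = ∑ i, ∑ j, ∑ a, ∑ b, numGeodesics (seqJoin k t) (i, a) (j, b) := by
    simp only [Fintype.sum_prod_type]
    exact sum_congr rfl fun i _ => sum_comm
  have hdeg : ∑ i : Fin t, #{l : Fin t | Nat.dist i l = 1} = 2 * (t - 1) := by
    simp only [card_filter]
    rw [Fin.sum_univ_sum_univ_eq_sum_range_sum_range (fun i l => if Nat.dist i l = 1 then 1 else 0),
      sum_range_sum_range_ite_dist_eq_one]
  rw [hblocks, ← Fin.sum_univ_sum_univ_eq_sum_range_sum_range]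
  simp only [sum_sum_numGeodesics ht, sum_add_distrib, sum_ite_eq, mem_univ, if_true, ← mul_sum,
    ← sum_mul, hdeg, sum_const, card_univ, Fintype.card_fin, smul_eq_mul]
  ring

end seqJoin

/-- exact value of the geodesic subpath number of `G_{k,t}`. -/
theorem gpn_seqJoin (k t : ℕ) (hk : 2 ≤ k) (ht : 2 ≤ t) :
    (gpn (seqJoin k t) : ℝ) =
      (1 / ((k : ℝ) - 1)) *
          (((k : ℝ) ^ (t + 2) - (k : ℝ) ^ 3) / ((k : ℝ) - 1)
            + (k : ℝ) ^ 3 * ((k : ℝ) - 2) * ((t : ℝ) - 1))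
        + (k : ℝ) * (t : ℝ) := by
  have hk1 : (k : ℝ) - 1 ≠ 0 := by
    have : (2 : ℝ) ≤ k := by exact_mod_cast hk
    linarith
  have hcount := congrArg (Nat.cast : ℕ → ℝ) (two_mul_gpn (seqJoin k t))
  rw [seqJoin.sum_numGeodesics ht, Fintype.card_prod, Fintype.card_fin, Fintype.card_fin] at hcount
  push_cast [Nat.cast_sub (by omega : 1 ≤ k), Nat.cast_sub (by omega : 1 ≤ t)] at hcount
  field_simp
  linear_combination ((k : ℝ) - 1) ^ 2 / 2 * hcount
    + (k : ℝ) ^ 2 / 2 * sum_range_sum_range_pow_dist_mul (k : ℝ) t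
end

section
/- Let k, t ≥ 2 be integers and let G_{k,t} be the sequential join of t copies of the discrete graph D_k, with copies denoted D_k^1, …, D_k^t in order. If u ∈ D_k^i and v ∈ D_k^j with i < j and d = j − i, then gpn_{G_{k,t}}(u,v) = k^{d−1}. -/
open SimpleGraph

/-!
The layer index `x.1` moves by at most one along an edge of `G_{k,t}`, so a walk from layer `i`
to layer `j` has length at least `j - i`, and walks of exactly that length are geodesics
(hence paths). Such a walk climbs one layer per step, choosing freely among the `k` vertices of
each of the `j - i - 1` intermediate layers.
-/

namespace SimpleGraph

variable {V : Type*} {G : SimpleGraph V}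

theorem Walk.le_add_length {f : V → ℕ} (hf : ∀ ⦃a b⦄, G.Adj a b → f b ≤ f a + 1)
    {u v : V} (p : G.Walk u v) : f v ≤ f u + p.length := by
  induction p with
  | nil => simp
  | cons h _ ih => have := hf h; rw [Walk.length_cons]; omega

theorem dist_eq_length_of_apply_eq_add_length {f : V → ℕ}
    (hf : ∀ ⦃a b⦄, G.Adj a b → f b ≤ f a + 1) {u v : V} (p : G.Walk u v)
    (hp : f v = f u + p.length) : G.dist u v = p.length := by
  obtain ⟨q, hq⟩ := p.reachable.exists_walk_length_eq_dist
  have := q.le_add_length hf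
  have := G.dist_le p
  omega

section Counting

variable [Fintype V] [DecidableEq V] [DecidableRel G.Adj]

theorem card_walk_length_one (u v : V) :
    Fintype.card {p : G.Walk u v | p.length = 1} = if G.Adj u v then 1 else 0 := by
  have h := G.adjMatrix_pow_apply_eq_card_walk (α := ℕ) 1 u v
  rw [Nat.cast_id] at h
  rw [← h, pow_one, adjMatrix_apply]

theorem card_walk_length_succ (n : ℕ) (u v : V) :
    Fintype.card {p : G.Walk u v | p.length = n + 1} =
      ∑ w ∈ G.neighborFinset u, Fintype.card {p : G.Walk w v | p.length = n} := by
  have h := G.adjMatrix_pow_apply_eq_card_walk (α := ℕ)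
  simp only [Nat.cast_id] at h
  simp only [← h, pow_succ', adjMatrix_mul_apply]

end Counting

end SimpleGraph

theorem numGeodesics_eq_card {V : Type*} [DecidableEq V] (G : SimpleGraph V) [G.LocallyFinite]
    (u v : V) : numGeodesics G u v = Fintype.card {p : G.Walk u v | p.length = G.dist u v} := by
  have hgeod : {p : G.Walk u v | p.IsPath ∧ p.length = G.dist u v} =
      {p : G.Walk u v | p.length = G.dist u v} := by
    ext p
    exact and_iff_right_of_imp p.isPath_of_length_eq_dist
  rw [numGeodesics, hgeod, Set.ncard_eq_toFinset_card', Set.toFinset_card]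

section SeqJoin

variable {k t : ℕ}

instance : DecidableRel (seqJoin k t).Adj := fun a b =>
  inferInstanceAs (Decidable (((a.1 : ℕ) + 1 = (b.1 : ℕ)) ∨ ((b.1 : ℕ) + 1 = (a.1 : ℕ))))

theorem seqJoin_adj_fst_le :
    ∀ ⦃a b : Fin t × Fin k⦄, (seqJoin k t).Adj a b → (b.1 : ℕ) ≤ a.1 + 1 := by
  rintro a b (h | h) <;> omega

theorem seqJoin_fst_le_add_length {u v : Fin t × Fin k} (p : (seqJoin k t).Walk u v) :
    (v.1 : ℕ) ≤ u.1 + p.length :=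
  p.le_add_length (f := fun x => (x.1 : ℕ)) seqJoin_adj_fst_le

theorem seqJoin_dist_eq_length {u v : Fin t × Fin k} (p : (seqJoin k t).Walk u v)
    (hp : (v.1 : ℕ) = u.1 + p.length) : (seqJoin k t).dist u v = p.length :=
  dist_eq_length_of_apply_eq_add_length (f := fun x => (x.1 : ℕ)) seqJoin_adj_fst_le p hp

theorem seqJoin_card_walk_length (n : ℕ) {u v : Fin t × Fin k}
    (h : (v.1 : ℕ) = u.1 + (n + 1)) :
    Fintype.card {p : (seqJoin k t).Walk u v | p.length = n + 1} = k ^ n := by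
  induction n generalizing u with
  | zero =>
    rw [card_walk_length_one, if_pos (show (seqJoin k t).Adj u v from Or.inl h.symm), pow_zero]
  | succ n ih =>
    have hlt : (u.1 : ℕ) + 1 < t := by omega
    have hterm : ∀ w ∈ (seqJoin k t).neighborFinset u,
        Fintype.card {p : (seqJoin k t).Walk w v | p.length = n + 1} =
          if w.1 = ⟨u.1 + 1, hlt⟩ then k ^ n else 0 := by
      intro w hw
      split_ifs with hw_above
      · exact ih (by simp only [hw_above]; omega)
      · have hw_below : (w.1 : ℕ) + 1 = u.1 :=
          ((mem_neighborFinset _ _ _).mp hw).resolve_left fun e => hw_above (Fin.ext e.symm)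
        rw [Fintype.card_eq_zero_iff, Set.isEmpty_coe_sort, Set.eq_empty_iff_forall_notMem]
        intro p hp
        have := seqJoin_fst_le_add_length p
        rw [Set.mem_ofPred_eq] at hp
        omega
    rw [card_walk_length_succ, Finset.sum_congr rfl hterm,
      Finset.sum_subset (Finset.subset_univ _)]
    · simp [Fintype.sum_prod_type_right, pow_succ']
    · intro w _ hw
      rw [mem_neighborFinset] at hw
      exact if_neg fun hw_above => hw (Or.inl (by rw [hw_above]))

end SeqJoin

theorem numGeodesics_seqJoin_general (k t : ℕ)
    (u v : Fin t × Fin k) (hij : u.1 < v.1) :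
    numGeodesics (seqJoin k t) u v = k ^ (((v.1 : ℕ) - (u.1 : ℕ)) - 1) := by
  obtain ⟨n, hn⟩ : ∃ n, (v.1 : ℕ) = u.1 + (n + 1) := ⟨v.1 - u.1 - 1, by omega⟩
  have hcard := seqJoin_card_walk_length n hn
  -- a walk of length `n + 1` exists since `k ^ n > 0`, `Fin k` being inhabited by `u.2`
  obtain ⟨⟨p, hp⟩⟩ := Fintype.card_pos_iff.mp (hcard ▸ pow_pos (Fin.pos u.2) n)
  rw [numGeodesics_eq_card, seqJoin_dist_eq_length p (by rw [hp]; exact hn), hp, hcard, hn]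
  congr 1
  omega

/-- in `G_{k,t}`, if `u` lies in copy `i` and `v` in copy `j` with `i < j`
and `d = j - i`, then the number of `(u,v)`-geodesics is `k^(d-1)`. -/
theorem numGeodesics_seqJoin (k t : ℕ) (hk : 2 ≤ k) (ht : 2 ≤ t)
    (u v : Fin t × Fin k) (hij : u.1 < v.1) :
    numGeodesics (seqJoin k t) u v = k ^ (((v.1 : ℕ) - (u.1 : ℕ)) - 1) :=
  numGeodesics_seqJoin_general k t u v hij
end

section
/- Let G be a cactus graph on n vertices with k cycles. Then gpn(G) ≥ binom(n+1, 2), with equality if and only if every cycle of G has odd length. -/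
open SimpleGraph

/-- The cycles of `G`, recorded as their edge sets. -/
def cycleEdgeSets {V : Type*} (G : SimpleGraph V) : Set (Set (Sym2 V)) :=
  {s | ∃ (u : V) (c : G.Walk u u), c.IsCycle ∧ s = {e | e ∈ c.edges}}

/-- A cactus graph: a connected graph in which all cycles are pairwise edge-disjoint. -/
def IsCactus {V : Type*} (G : SimpleGraph V) : Prop :=
  G.Connected ∧ (cycleEdgeSets G).Pairwise Disjoint


/-!
In a connected graph every pair of vertices is joined by at least one geodesic, so
`gpn G ≥ binom(n, 2) + n`, with equality iff all geodesics are unique. Two distinct geodesics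
between the same vertices contain subwalks closing up a cycle; these subwalks are again geodesics
with common endpoints, so the cycle is even. Conversely, every cycle of a cactus is isometric: a
shortcut between two of its vertices would close up a second, shorter cycle sharing an edge with
it. Hence the two halves of an even cycle are distinct geodesics between antipodal vertices.
-/

open SimpleGraph.Walk

namespace SimpleGraph.Walk

variable {V : Type*} {G : SimpleGraph V}

lemma IsPath.not_nil_of_isCycle_append_reverse {u v : V} {p q : G.Walk u v} (hp : p.IsPath)
    (hc : (p.append q.reverse).IsCycle) : ¬ q.Nil := by
  intro hq
  obtain rfl := hq.eq
  have hp_nil : p = Walk.nil := congrArg Subtype.val (Path.loop_eq ⟨p, hp⟩)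
  have := hc.three_le_length
  simp [hp_nil, hq.eq_nil] at this

end SimpleGraph.Walk

section Geodesics

variable {V : Type*} {G : SimpleGraph V}

lemma finite_geodesics [Finite V] (u v : V) :
    {p : G.Walk u v | p.IsPath ∧ p.length = G.dist u v}.Finite := by
  classical
  have := Fintype.ofFinite V
  exact Set.toFinite _

lemma numGeodesics_pos [Finite V] {u v : V} (h : G.Reachable u v) : 0 < numGeodesics G u v := by
  obtain ⟨p, hp⟩ := h.exists_path_of_dist
  exact (Set.ncard_pos (finite_geodesics u v)).mpr ⟨p, hp⟩

lemma exists_even_isCycle_of_two_geodesics {u v : V} {p q : G.Walk u v}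
    (hp : p.length = G.dist u v) (hq : q.length = G.dist u v) (hne : p ≠ q) :
    ∃ (w : V) (c : G.Walk w w), c.IsCycle ∧ Even c.length := by
  obtain ⟨u', v', p', q', hp', hq', hc⟩ :=
    (p.isPath_of_length_eq_dist hp).exists_isCycle_of_ne (q.isPath_of_length_eq_dist hq) hne
  refine ⟨u', _, hc, ?_⟩
  rw [length_append, length_reverse, length_eq_dist_of_subwalk hp hp',
    length_eq_dist_of_subwalk hq hq']
  exact ⟨_, rfl⟩

lemma numGeodesics_le_one [Finite V]
    (hodd : ∀ (w : V) (c : G.Walk w w), c.IsCycle → Odd c.length) (u v : V) : numGeodesics G u v ≤ 1 := by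
  refine (Set.ncard_le_one (finite_geodesics u v)).mpr fun p hp q hq => ?_
  by_contra hne
  obtain ⟨w, c, hc, heven⟩ := exists_even_isCycle_of_two_geodesics hp.2 hq.2 hne
  exact Nat.not_even_iff_odd.mpr (hodd w c hc) heven

end Geodesics

section Cactus

variable {V : Type*} {G : SimpleGraph V}

lemma length_eq_of_mem_edges_of_isCycle (hG : (cycleEdgeSets G).Pairwise Disjoint) {u w : V}
    {c : G.Walk u u} {c' : G.Walk w w} (hc : c.IsCycle) (hc' : c'.IsCycle) {e : Sym2 V}
    (he : e ∈ c.edges) (he' : e ∈ c'.edges) : c.length = c'.length := by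
  have hset : {e | e ∈ c.edges} = {e | e ∈ c'.edges} := by
    by_contra hne
    exact Set.disjoint_left.mp (hG ⟨u, c, hc, rfl⟩ ⟨w, c', hc', rfl⟩ hne) he he'
  rw [← length_edges, ← length_edges]
  exact ((List.perm_ext_iff_of_nodup hc.edges_nodup hc'.edges_nodup).mpr
    fun f => Set.ext_iff.mp hset f).length_eq

lemma dist_getVert_eq_of_isCycle (hG : (cycleEdgeSets G).Pairwise Disjoint) {u : V}
    {c : G.Walk u u} (hc : c.IsCycle) {n : ℕ} (hn : 2 * n ≤ c.length) :
    G.dist u (c.getVert n) = n := by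
  have hlt : n < c.length := by have := hc.three_le_length; omega
  have hs : (c.take n).length = n := by simp only [take_length]; omega
  refine le_antisymm ((dist_le _).trans hs.le) (not_lt.mp fun hdist => ?_)
  obtain ⟨P, hP, hPlen⟩ := (c.take n).reachable.exists_path_of_dist
  obtain ⟨u', v', p', q', hp', hq', hC⟩ :=
    hP.exists_isCycle_of_ne (hc.isPath_take hlt) (by rintro rfl; omega)
  have hq'nil := (isPath_of_isSubwalk hp' hP).not_nil_of_isCycle_append_reverse hC
  have hmem : s(u', q'.snd) ∈ c.edges :=
    (c.isSubwalk_take n).edges_subset (hq'.edges_subset (mk_start_snd_mem_edges hq'nil))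
  have hmem' : s(u', q'.snd) ∈ (p'.append q'.reverse).edges := by
    simp [edges_append, mk_start_snd_mem_edges hq'nil]
  have hCc := length_eq_of_mem_edges_of_isCycle hG hc hC hmem hmem'
  have := length_le_of_isSubwalk hp'
  have := length_le_of_isSubwalk hq'
  rw [length_append, length_reverse] at hCc
  omega

lemma exists_one_lt_numGeodesics_of_even_isCycle [Finite V]
    (hG : (cycleEdgeSets G).Pairwise Disjoint) {u : V} {c : G.Walk u u} (hc : c.IsCycle)
    (heven : Even c.length) : ∃ v, u ≠ v ∧ 1 < numGeodesics G u v := by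
  obtain ⟨m, hm⟩ := heven
  have hdist := dist_getVert_eq_of_isCycle hG hc (n := m) (by omega)
  have hm0 : m ≠ 0 := by have := hc.three_le_length; omega
  have mem_geodesics {p : G.Walk u (c.getVert m)} (hp : p.length = m) :
      p ∈ {p : G.Walk u (c.getVert m) | p.IsPath ∧ p.length = G.dist u (c.getVert m)} :=
    ⟨p.isPath_of_length_eq_dist (hp.trans hdist.symm), hp.trans hdist.symm⟩
  refine ⟨c.getVert m, fun h => hm0 (by rw [← hdist, ← h, dist_self]), ?_⟩
  refine (Set.one_lt_ncard (finite_geodesics _ _)).mpr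
    ⟨c.take m, mem_geodesics (by simp only [take_length]; omega), (c.drop m).reverse,
      mem_geodesics (by simp only [length_reverse, drop_length]; omega), fun h => ?_⟩
  have hedges := congrArg edges h
  rw [edges_take, edges_reverse, edges_drop] at hedges
  obtain ⟨e, he⟩ := List.exists_mem_of_ne_nil (c.edges.take m) <| by
    simpa only [ne_eq, List.take_eq_nil_iff, edges_eq_nil, not_or] using ⟨hm0, hc.not_nil⟩
  exact List.disjoint_take_drop hc.edges_nodup le_rfl he (List.mem_reverse.mp (hedges ▸ he))

end Cactus

section GeodesicSubpathNumber

variable {V : Type*} [Fintype V] [DecidableEq V] {G : SimpleGraph V}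

lemma gpn_eq_choose_two_add_sum (hpos : ∀ u v, 0 < numGeodesics G u v) :
    gpn G = (Fintype.card V + 1).choose 2 +
      ∑ e ∈ Finset.univ.filter (fun e : Sym2 V => ¬ e.IsDiag),
        Sym2.lift ⟨fun u v => numGeodesics G u v - 1,
          fun u v => congrArg (· - 1) (numGeodesics_comm G u v)⟩ e := by
  have hsplit : ∀ e : Sym2 V,
      Sym2.lift ⟨fun u v => numGeodesics G u v, fun u v => numGeodesics_comm G u v⟩ e =
        Sym2.lift ⟨fun u v => numGeodesics G u v - 1,
          fun u v => congrArg (· - 1) (numGeodesics_comm G u v)⟩ e + 1 :=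
    Sym2.ind fun u v => (Nat.sub_add_cancel (hpos u v)).symm
  rw [gpn, Finset.sum_congr rfl fun e _ => hsplit e, Finset.sum_add_distrib, Finset.sum_const,
    smul_eq_mul, mul_one, ← Fintype.card_subtype, Sym2.card_subtype_not_diag,
    Nat.choose_succ_succ', Nat.choose_one_right]
  ring

lemma choose_two_le_gpn (hpos : ∀ u v, 0 < numGeodesics G u v) :
    (Fintype.card V + 1).choose 2 ≤ gpn G :=
  (gpn_eq_choose_two_add_sum hpos).symm ▸ Nat.le_add_right _ _

lemma gpn_eq_choose_two_iff (hpos : ∀ u v, 0 < numGeodesics G u v) :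
    gpn G = (Fintype.card V + 1).choose 2 ↔ ∀ u v, u ≠ v → numGeodesics G u v ≤ 1 := by
  rw [gpn_eq_choose_two_add_sum hpos, Nat.add_eq_left, Finset.sum_eq_zero_iff]
  simp [Sym2.forall, Nat.sub_eq_zero_iff_le]

end GeodesicSubpathNumber

theorem gpn_cactus_lower_bound_general {V : Type*} [Fintype V] [DecidableEq V]
    (G : SimpleGraph V) (hG : IsCactus G) :
    (Fintype.card V + 1).choose 2 ≤ gpn G ∧
      (gpn G = (Fintype.card V + 1).choose 2 ↔
        ∀ (u : V) (c : G.Walk u u), c.IsCycle → Odd c.length) := by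
  have hpos u v : 0 < numGeodesics G u v := numGeodesics_pos (hG.1.preconnected u v)
  refine ⟨choose_two_le_gpn hpos, (gpn_eq_choose_two_iff hpos).trans ⟨fun h u c hc => ?_,
    fun hodd u v _ => numGeodesics_le_one hodd u v⟩⟩
  by_contra hodd
  obtain ⟨v, huv, hlt⟩ :=
    exists_one_lt_numGeodesics_of_even_isCycle hG.2 hc (Nat.not_odd_iff_even.mp hodd)
  exact (h u v huv).not_gt hlt

/-- a cactus on `n` vertices with `k` cycles satisfies
`gpn(G) ≥ binom(n+1,2)`, with equality iff every cycle has odd length. -/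
theorem gpn_cactus_lower_bound {V : Type*} [Fintype V] [DecidableEq V]
    (G : SimpleGraph V) (k : ℕ) (hG : IsCactus G) (hk : (cycleEdgeSets G).ncard = k) :
    (Fintype.card V + 1).choose 2 ≤ gpn G ∧
      (gpn G = (Fintype.card V + 1).choose 2 ↔
        ∀ (u : V) (c : G.Walk u u), c.IsCycle → Odd c.length) :=
  gpn_cactus_lower_bound_general G hG
end
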